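/- Define β = (1−V²)^((2−γ)/2)/G₊ and R₄ = η·σ₁/(β²·Ω²). Along any solution of the reduced tilted Bianchi type VIII system with Ω > 0 and V² < 1 for all τ, R₄ is differentiable and satisfies R₄' = 6(γ−1)·R₄. In particular, for γ = 1 the quantity η·σ₁/(β²Ω²) is constant along solutions. -/

import Mathlib

noncomputable section

/-- State of the reduced tilted Bianchi type VIII system: real variables
`Sp` (= Σ₊), `σ1`, `η`, `M`, `Om` (= Ω), `v1`, `v2`, functions of τ. -/
structure ReducedVIII (γ : ℝ) (I : Set ℝ) where
  Sp : ℝ → ℝ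
  σ1 : ℝ → ℝ
  η : ℝ → ℝ
  M : ℝ → ℝ
  Om : ℝ → ℝ
  v1 : ℝ → ℝ
  v2 : ℝ → ℝ

namespace ReducedVIII

variable {γ : ℝ} {I : Set ℝ}

/-- V² = v₁² + v₂² -/
def V2 (S : ReducedVIII γ I) (τ : ℝ) : ℝ := S.v1 τ ^ 2 + S.v2 τ ^ 2

/-- G₊ = 1 + (γ−1)V² -/
def Gp (S : ReducedVIII γ I) (τ : ℝ) : ℝ := 1 + (γ - 1) * S.V2 τ

/-- Q = 2Σ₊² + σ₁ + (1/2)((3γ−2)+(2−γ)V²)Ω/G₊ -/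
def Q (S : ReducedVIII γ I) (τ : ℝ) : ℝ :=
  2 * S.Sp τ ^ 2 + S.σ1 τ + (1/2) * ((3*γ - 2) + (2 - γ) * S.V2 τ) * S.Om τ / S.Gp τ

/-- W = V²𝒮 = (−2v₁² + v₂²)Σ₊ -/
def W (S : ReducedVIII γ I) (τ : ℝ) : ℝ := (-2 * S.v1 τ ^ 2 + S.v2 τ ^ 2) * S.Sp τ

/-- T = ((3γ−4)(1−V²) + (2−γ)W)/(1−(γ−1)V²) -/
def T (S : ReducedVIII γ I) (τ : ℝ) : ℝ :=
  ((3*γ - 4) * (1 - S.V2 τ) + (2 - γ) * S.W τ) / (1 - (γ - 1) * S.V2 τ)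

/-- The evolution equations and the constraint of the reduced system, holding
at each τ in the interval `I`. -/
structure IsSolution (S : ReducedVIII γ I) : Prop where
  hSp : ∀ τ ∈ I, HasDerivAt S.Sp
    ((S.Q τ - 2) * S.Sp τ + S.η τ - S.σ1 τ
      + γ * S.Om τ / (2 * S.Gp τ) * (-2 * S.v1 τ ^ 2 + S.v2 τ ^ 2)) τ
  hσ1 : ∀ τ ∈ I, HasDerivAt S.σ1 (2 * (S.Q τ + S.Sp τ - 1) * S.σ1 τ) τ
  hη : ∀ τ ∈ I, HasDerivAt S.η (2 * (S.Q τ - S.Sp τ) * S.η τ) τ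
  hM : ∀ τ ∈ I, HasDerivAt S.M (-(S.Q τ + 2 * S.Sp τ) * S.M τ) τ
  hOm : ∀ τ ∈ I, HasDerivAt S.Om
    (S.Om τ / S.Gp τ * (2 * S.Q τ - (3*γ - 2)
      + (2 * S.Q τ * (γ - 1) - (2 - γ)) * S.V2 τ - γ * S.W τ)) τ
  hv1 : ∀ τ ∈ I, HasDerivAt S.v1 ((S.T τ + 2 * S.Sp τ) * S.v1 τ) τ
  hv2 : ∀ τ ∈ I, HasDerivAt S.v2 ((S.T τ - S.Sp τ) * S.v2 τ) τ
  hC : ∀ τ ∈ I, 1 = S.Sp τ ^ 2 + S.σ1 τ + S.η τ + S.Om τ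

end ReducedVIII

/-- R₄ = η·σ₁/(β²·Ω²), with β = (1−V²)^((2−γ)/2)/G₊. -/
noncomputable def R4 {γ : ℝ} {I : Set ℝ} (S : ReducedVIII γ I) (τ : ℝ) : ℝ :=
  S.η τ * S.σ1 τ / (((1 - S.V2 τ) ^ ((2 - γ)/2) / S.Gp τ) ^ 2 * S.Om τ ^ 2)

/-!
Logarithmic differentiation: `log R₄ = log η + log σ₁ - 2 log β - 2 log Ω`. The
evolution equations give `(ησ₁)'/(ησ₁) = 4Q - 2`, and `-2Ω'/Ω` contributes `-4Q` plus
terms in `V²` and `W`; the `V²`- and `W`-terms are cancelled exactly by `-2β'/β`,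
computed from `(V²)' = 2(TV² - W)`, leaving the constant `6(γ - 1)`. For `γ = 1` the
derivative vanishes on the half-line, so `R₄` is constant there.
-/

section LogDeriv

variable {𝕜 : Type*} [NontriviallyNormedField 𝕜] {f g : 𝕜 → 𝕜} {a b x : 𝕜}

theorem HasDerivAt.mul_of_logDeriv (hf : HasDerivAt f (a * f x) x)
    (hg : HasDerivAt g (b * g x) x) :
    HasDerivAt (fun t => f t * g t) ((a + b) * (f x * g x)) x :=
  (hf.mul hg).congr_deriv (by ring)

theorem HasDerivAt.div_of_logDeriv (hf : HasDerivAt f (a * f x) x)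
    (hg : HasDerivAt g (b * g x) x) (hx : g x ≠ 0) :
    HasDerivAt (fun t => f t / g t) ((a - b) * (f x / g x)) x :=
  (hf.div hg hx).congr_deriv (by field_simp)

theorem HasDerivAt.pow_of_logDeriv (n : ℕ) (hf : HasDerivAt f (a * f x) x) :
    HasDerivAt (fun t => f t ^ n) (n * a * f x ^ n) x := by
  refine (hf.pow n).congr_deriv ?_
  cases n with
  | zero => simp
  | succ n => simp only [Nat.add_sub_cancel, pow_succ]; ring

end LogDeriv

theorem HasDerivAt.rpow_const_of_logDeriv {f : ℝ → ℝ} {a x : ℝ} (p : ℝ)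
    (hf : HasDerivAt f (a * f x) x) (hx : f x ≠ 0) :
    HasDerivAt (fun t => f t ^ p) (p * a * f x ^ p) x := by
  refine (hf.rpow_const (Or.inl hx)).congr_deriv ?_
  rw [Real.rpow_sub_one hx]
  field_simp

theorem Convex.eq_of_forall_hasDerivAt_zero {E : Type*} [NormedAddCommGroup E]
    [NormedSpace ℝ E] {f : ℝ → E} {s : Set ℝ} (hs : Convex ℝ s)
    (hf : ∀ x ∈ s, HasDerivAt f 0 x) {x y : ℝ} (hx : x ∈ s) (hy : y ∈ s) : f x = f y := by
  have h := hs.norm_image_sub_le_of_norm_hasDerivWithin_le (C := 0)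
    (fun z hz => (hf z hz).hasDerivWithinAt) (fun _ _ => by simp) hx hy
  rw [zero_mul, norm_le_zero_iff, sub_eq_zero] at h
  exact h.symm

namespace ReducedVIII

variable {γ : ℝ} {I : Set ℝ} {S : ReducedVIII γ I} {τ : ℝ}

def β (S : ReducedVIII γ I) (τ : ℝ) : ℝ := (1 - S.V2 τ) ^ ((2 - γ) / 2) / S.Gp τ

def logDerivβ (S : ReducedVIII γ I) (τ : ℝ) : ℝ :=
  -2 * (S.T τ * S.V2 τ - S.W τ) * ((2 - γ) / 2 / (1 - S.V2 τ) + (γ - 1) / S.Gp τ)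

def logDerivOm (S : ReducedVIII γ I) (τ : ℝ) : ℝ :=
  (2 * S.Q τ - (3 * γ - 2) + (2 * S.Q τ * (γ - 1) - (2 - γ)) * S.V2 τ - γ * S.W τ) / S.Gp τ

theorem R4_eq_div_β : R4 S = fun t => S.η t * S.σ1 t / (S.β t ^ 2 * S.Om t ^ 2) := rfl

theorem V2_nonneg : 0 ≤ S.V2 τ := by unfold V2; positivity

theorem Gp_pos (hγ : 0 < γ) (hV : S.V2 τ < 1) : 0 < S.Gp τ := by
  have := V2_nonneg (S := S) (τ := τ)
  unfold Gp; nlinarith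

theorem one_sub_mul_V2_pos (hγ : γ < 2) (hV : S.V2 τ < 1) : 0 < 1 - (γ - 1) * S.V2 τ := by
  have := V2_nonneg (S := S) (τ := τ)
  nlinarith

theorem logDeriv_R4_eq (h1V : 1 - S.V2 τ ≠ 0) (hG : S.Gp τ ≠ 0)
    (hH : 1 - (γ - 1) * S.V2 τ ≠ 0) :
    4 * S.Q τ - 2 - (2 * S.logDerivβ τ + 2 * S.logDerivOm τ) = 6 * (γ - 1) := by
  unfold logDerivβ logDerivOm Q T
  generalize hHdef : 1 - (γ - 1) * S.V2 τ = H at hH ⊢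
  generalize hUdef : 1 - S.V2 τ = U at h1V ⊢
  generalize hGdef : S.Gp τ = G at hG ⊢
  field_simp
  subst hHdef hUdef hGdef
  unfold Gp
  ring

namespace IsSolution

theorem hasDerivAt_V2 (hS : S.IsSolution) (hτ : τ ∈ I) :
    HasDerivAt S.V2 (2 * (S.T τ * S.V2 τ - S.W τ)) τ :=
  (((hS.hv1 τ hτ).pow 2).add ((hS.hv2 τ hτ).pow 2)).congr_deriv (by unfold V2 W; ring)

theorem hasDerivAt_β (hS : S.IsSolution) (hτ : τ ∈ I) (h1V : 1 - S.V2 τ ≠ 0)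
    (hG : S.Gp τ ≠ 0) : HasDerivAt S.β (S.logDerivβ τ * S.β τ) τ := by
  have hV2 := hS.hasDerivAt_V2 hτ
  have hOneSub : HasDerivAt (fun t => 1 - S.V2 t)
      (-2 * (S.T τ * S.V2 τ - S.W τ) / (1 - S.V2 τ) * (1 - S.V2 τ)) τ :=
    (hV2.const_sub 1).congr_deriv (by field_simp)
  have hGp : HasDerivAt S.Gp
      ((γ - 1) * (2 * (S.T τ * S.V2 τ - S.W τ)) / S.Gp τ * S.Gp τ) τ :=
    ((hV2.const_mul (γ - 1)).const_add 1).congr_deriv (by field_simp)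
  exact ((hOneSub.rpow_const_of_logDeriv _ h1V).div_of_logDeriv hGp hG).congr_deriv
    (by unfold β logDerivβ; ring)

theorem hasDerivAt_Om (hS : S.IsSolution) (hτ : τ ∈ I) :
    HasDerivAt S.Om (S.logDerivOm τ * S.Om τ) τ :=
  (hS.hOm τ hτ).congr_deriv (by unfold logDerivOm; ring)

theorem hasDerivAt_η_mul_σ1 (hS : S.IsSolution) (hτ : τ ∈ I) :
    HasDerivAt (fun t => S.η t * S.σ1 t) ((4 * S.Q τ - 2) * (S.η τ * S.σ1 τ)) τ :=
  ((hS.hη τ hτ).mul (hS.hσ1 τ hτ)).congr_deriv (by ring)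

theorem hasDerivAt_R4 (hS : S.IsSolution) (hτ : τ ∈ I) (hγ0 : 0 < γ) (hγ2 : γ < 2)
    (hV : S.V2 τ < 1) (hOm : 0 < S.Om τ) :
    HasDerivAt (R4 S) (6 * (γ - 1) * R4 S τ) τ := by
  have h1V : 1 - S.V2 τ ≠ 0 := (sub_pos.2 hV).ne'
  have hG := (Gp_pos hγ0 hV).ne'
  have hβ : S.β τ ≠ 0 := div_ne_zero (Real.rpow_pos_of_pos (sub_pos.2 hV) _).ne' hG
  have hD := ((hS.hasDerivAt_β hτ h1V hG).pow_of_logDeriv 2).mul_of_logDeriv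
    ((hS.hasDerivAt_Om hτ).pow_of_logDeriv 2)
  rw [R4_eq_div_β, ← logDeriv_R4_eq h1V hG (one_sub_mul_V2_pos hγ2 hV).ne']
  refine ((hS.hasDerivAt_η_mul_σ1 hτ).div_of_logDeriv hD (by positivity)).congr_deriv ?_
  simp only [Nat.cast_ofNat]

end IsSolution

end ReducedVIII

/-- Along any solution of the reduced system with Ω > 0 and
V² < 1, R₄ = ησ₁/(β²Ω²) is differentiable with R₄' = 6(γ−1)·R₄; in particular,
for γ = 1 it is constant along solutions. -/
theorem reducedVIII_R4_deriv (γ : ℝ) (hγ0 : 0 < γ) (hγ2 : γ < 2)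
    (τ₀ : ℝ) (S : ReducedVIII γ (Set.Ici τ₀)) (hsol : S.IsSolution)
    (hOm : ∀ τ ∈ Set.Ici τ₀, 0 < S.Om τ)
    (hV : ∀ τ ∈ Set.Ici τ₀, S.V2 τ < 1) :
    (∀ τ ∈ Set.Ici τ₀, HasDerivAt (R4 S) (6 * (γ - 1) * R4 S τ) τ) ∧
    (γ = 1 → ∀ τ₁ ∈ Set.Ici τ₀, ∀ τ₂ ∈ Set.Ici τ₀, R4 S τ₁ = R4 S τ₂) := by
  have hR4 : ∀ τ ∈ Set.Ici τ₀, HasDerivAt (R4 S) (6 * (γ - 1) * R4 S τ) τ := fun τ hτ =>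
    hsol.hasDerivAt_R4 hτ hγ0 hγ2 (hV τ hτ) (hOm τ hτ)
  refine ⟨hR4, fun hγ1 τ₁ hτ₁ τ₂ hτ₂ => ?_⟩
  subst hγ1
  exact (convex_Ici τ₀).eq_of_forall_hasDerivAt_zero
    (fun τ hτ => by simpa using hR4 τ hτ) hτ₁ hτ₂
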